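/- arXiv:1902.03736 — 2 statements merged into one kernel-verified Lean document; each statement's English description precedes it below -/
import Mathlib

section
/- If a random vector X in ℝ^d is (σ/√d)-subGaussian, i.e. E exp(⟨v, X − E X⟩) ≤ exp(‖v‖² σ²/(2d)) for all v ∈ ℝ^d, then X is norm-subGaussian with parameter 2√2·σ, i.e. Pr(‖X − E X‖ ≥ t) ≤ 2 exp(−t²/(16σ²)) for all t ≥ 0. -/
/-!
Centre `X` at `Y = X - 𝔼 X`. Every coordinate `Y i = ⟪e i, Y⟫` has a sub-Gaussian MGF with
variance proxy `σ² / d`, hence tails at most `2 exp (-u² d / (2 σ²))`, and the layer-cake formula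
turns these into `𝔼 exp (b (Y i)²) ≤ 7` for `b = 3 d / (8 σ²)`. As `‖Y‖² = ∑ i, (Y i)²`, Hölder's
inequality with all exponents equal to `d` averages the coordinates into
`𝔼 exp (3 ‖Y‖² / (8 σ²)) ≤ 7`, and Markov's inequality gives `Pr (t ≤ ‖Y‖) ≤ 7 y⁶` with
`y = exp (-t² / (16 σ²))`. Finally `min 1 (7 y⁶) ≤ 2 y`.
-/

open MeasureTheory ProbabilityTheory Real
open scoped RealInnerProductSpace

section

open Set Filter
open scoped NNReal ENNReal

variable {Ω : Type*} [MeasurableSpace Ω] {μ : Measure Ω}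

lemma integral_Ioi_mul_exp_neg_mul_sq {c : ℝ} (hc : 0 < c) :
    ∫ x in Ioi (0 : ℝ), x * exp (-c * x ^ 2) = (2 * c)⁻¹ := by
  have hderiv (x : ℝ) :
      HasDerivAt (fun y ↦ -(2 * c)⁻¹ * exp (-c * y ^ 2)) (x * exp (-c * x ^ 2)) x := by
    refine ((((hasDerivAt_pow 2 x).const_mul (-c)).exp).const_mul (-(2 * c)⁻¹)).congr_deriv ?_
    field_simp
    ring
  have hlim : Tendsto (fun y : ℝ ↦ -(2 * c)⁻¹ * exp (-c * y ^ 2)) atTop (nhds 0) := by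
    have h := (tendsto_exp_atBot.comp <|
      (tendsto_pow_atTop two_ne_zero).const_mul_atTop_of_neg (neg_lt_zero.mpr hc)).const_mul
      (-(2 * c)⁻¹)
    simpa only [mul_zero, Function.comp_def] using h
  rw [integral_Ioi_of_hasDerivAt_of_tendsto (by fun_prop) (fun x _ ↦ hderiv x)
    (integrable_mul_exp_neg_mul_sq hc).integrableOn hlim]
  simp

lemma intervalIntegral_mul_exp_mul_sq (b z : ℝ) :
    ∫ u in (0 : ℝ)..|z|, 2 * b * u * exp (b * u ^ 2) = exp (b * z ^ 2) - 1 := by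
  have hderiv (u : ℝ) : HasDerivAt (fun y ↦ exp (b * y ^ 2)) (2 * b * u * exp (b * u ^ 2)) u :=
    ((hasDerivAt_pow 2 u).const_mul b).exp.congr_deriv (by ring)
  rw [intervalIntegral.integral_eq_sub_of_hasDerivAt (fun u _ ↦ hderiv u)
    ((by fun_prop : Continuous fun u ↦ 2 * b * u * exp (b * u ^ 2)).intervalIntegrable _ _)]
  simp

lemma lintegral_exp_mul_sq_le_of_measure_abs_ge_le {Z : Ω → ℝ} (hZ : AEMeasurable Z μ)
    {b κ C : ℝ} (hb : 0 ≤ b) (hbκ : b < κ) (hC : 0 ≤ C)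
    (htail : ∀ u > 0, μ {ω | u ≤ |Z ω|} ≤ ENNReal.ofReal (C * exp (-κ * u ^ 2))) :
    ∫⁻ ω, ENNReal.ofReal (exp (b * Z ω ^ 2)) ∂μ ≤ μ univ + ENNReal.ofReal (C * b / (κ - b)) := by
  set g : ℝ → ℝ := fun u ↦ 2 * b * u * exp (b * u ^ 2)
  have hsplit (ω : Ω) :
      ENNReal.ofReal (exp (b * Z ω ^ 2)) = 1 + ENNReal.ofReal (∫ u in (0 : ℝ)..|Z ω|, g u) := by
    rw [intervalIntegral_mul_exp_mul_sq, ← ENNReal.ofReal_one,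
      ← ENNReal.ofReal_add zero_le_one (sub_nonneg.2 (one_le_exp (by positivity))),
      add_sub_cancel]
  have hlayer := lintegral_comp_eq_lintegral_meas_le_mul μ (ae_of_all _ fun ω ↦ abs_nonneg (Z ω))
    hZ.abs (fun u _ ↦ (by fun_prop : Continuous g).intervalIntegrable 0 u)
    (by filter_upwards [ae_restrict_mem measurableSet_Ioi] with u (hu : 0 < u); positivity)
  have hκb : 0 < κ - b := sub_pos.2 hbκ
  have hlayer_le : ∫⁻ u in Ioi 0, μ {ω | u ≤ |Z ω|} * ENNReal.ofReal (g u) ≤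
      ∫⁻ u in Ioi 0, ENNReal.ofReal (2 * b * C * (u * exp (-(κ - b) * u ^ 2))) := by
    refine setLIntegral_mono' measurableSet_Ioi fun u (hu : 0 < u) ↦ ?_
    calc μ {ω | u ≤ |Z ω|} * ENNReal.ofReal (g u)
        ≤ ENNReal.ofReal (C * exp (-κ * u ^ 2)) * ENNReal.ofReal (g u) := by
          gcongr
          exact htail u hu
      _ = ENNReal.ofReal (2 * b * C * (u * exp (-(κ - b) * u ^ 2))) := by
          rw [← ENNReal.ofReal_mul (by positivity)]
          congr 1
          simp only [g, sub_eq_add_neg, neg_add, neg_neg, add_mul, exp_add]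
          ring
  have hintegral : ∫⁻ u in Ioi 0, ENNReal.ofReal (2 * b * C * (u * exp (-(κ - b) * u ^ 2))) =
      ENNReal.ofReal (C * b / (κ - b)) := by
    rw [← ofReal_integral_eq_lintegral_ofReal
      ((integrable_mul_exp_neg_mul_sq hκb).integrableOn.const_mul _)
      (by filter_upwards [ae_restrict_mem measurableSet_Ioi] with u (hu : 0 < u); positivity),
      integral_const_mul, integral_Ioi_mul_exp_neg_mul_sq hκb]
    congr 1
    field_simp
  calc ∫⁻ ω, ENNReal.ofReal (exp (b * Z ω ^ 2)) ∂μ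
      = ∫⁻ ω, 1 + ENNReal.ofReal (∫ u in (0 : ℝ)..|Z ω|, g u) ∂μ := lintegral_congr hsplit
    _ = μ univ + ∫⁻ u in Ioi 0, μ {ω | u ≤ |Z ω|} * ENNReal.ofReal (g u) := by
        rw [lintegral_add_left measurable_const, lintegral_const, one_mul, hlayer]
    _ ≤ μ univ + ENNReal.ofReal (C * b / (κ - b)) := by
        gcongr
        exact hlayer_le.trans hintegral.le

lemma ProbabilityTheory.HasSubgaussianMGF.measure_abs_ge_le [IsFiniteMeasure μ] {X : Ω → ℝ}
    {c : ℝ≥0} (h : HasSubgaussianMGF X c μ) {ε : ℝ} (hε : 0 ≤ ε) :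
    μ {ω | ε ≤ |X ω|} ≤ ENNReal.ofReal (2 * exp (-ε ^ 2 / (2 * c))) := by
  have hsub : {ω | ε ≤ |X ω|} ⊆ {ω | ε ≤ X ω} ∪ {ω | ε ≤ (-X) ω} :=
    fun ω (hω : ε ≤ |X ω|) ↦ le_abs.1 hω
  calc μ {ω | ε ≤ |X ω|} ≤ μ {ω | ε ≤ X ω} + μ {ω | ε ≤ (-X) ω} :=
        (measure_mono hsub).trans (measure_union_le _ _)
    _ ≤ ENNReal.ofReal (exp (-ε ^ 2 / (2 * c))) + ENNReal.ofReal (exp (-ε ^ 2 / (2 * c))) := by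
        rw [← ofReal_measureReal, ← ofReal_measureReal]
        gcongr
        exacts [h.measure_ge_le hε, h.neg.measure_ge_le hε]
    _ = ENNReal.ofReal (2 * exp (-ε ^ 2 / (2 * c))) := by
        rw [← ENNReal.ofReal_add (by positivity) (by positivity), ← two_mul]

lemma ProbabilityTheory.HasSubgaussianMGF.lintegral_exp_mul_sq_le [IsFiniteMeasure μ]
    {X : Ω → ℝ} {c : ℝ≥0} (h : HasSubgaussianMGF X c μ) (hc : 0 < c) {b : ℝ} (hb : 0 ≤ b)
    (hbc : 2 * b * c < 1) :
    ∫⁻ ω, ENNReal.ofReal (exp (b * X ω ^ 2)) ∂μ ≤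
      μ univ + ENNReal.ofReal (4 * b * c / (1 - 2 * b * c)) := by
  have hc' : (0 : ℝ) < c := hc
  convert lintegral_exp_mul_sq_le_of_measure_abs_ge_le h.aemeasurable hb (κ := (2 * c)⁻¹)
    ?_ zero_le_two fun u hu ↦ ?_ using 3
  · field_simp
    ring
  · rw [← one_div, lt_div_iff₀ (by positivity)]
    linarith
  · convert h.measure_abs_ge_le hu.le using 4
    field_simp

lemma hasSubgaussianMGF_inner {E : Type*} [NormedAddCommGroup E] [InnerProductSpace ℝ E]
    {Y : Ω → E} {c : ℝ≥0} (hint : ∀ v, Integrable (fun ω ↦ exp ⟪v, Y ω⟫) μ)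
    (hmgf : ∀ v, ∫ ω, exp ⟪v, Y ω⟫ ∂μ ≤ exp (‖v‖ ^ 2 * c / 2)) (v : E) :
    HasSubgaussianMGF (fun ω ↦ ⟪v, Y ω⟫) (‖v‖₊ ^ 2 * c) μ where
  integrable_exp_mul t := by simpa only [real_inner_smul_left] using hint (t • v)
  mgf_le t := by
    have h := hmgf (t • v)
    rw [norm_smul, mul_pow, Real.norm_eq_abs, sq_abs] at h
    simp only [real_inner_smul_left] at h
    rw [mgf]
    convert h using 2
    push_cast
    ring

lemma lintegral_exp_mul_norm_sq_le {ι : Type*} [Fintype ι] [Nonempty ι]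
    {Y : Ω → EuclideanSpace ℝ ι} (hY : ∀ i, AEMeasurable (fun ω ↦ Y ω i) μ) {s : ℝ} {K : ℝ≥0∞}
    (hK : ∀ i, ∫⁻ ω, ENNReal.ofReal (exp (Fintype.card ι * s * Y ω i ^ 2)) ∂μ ≤ K) :
    ∫⁻ ω, ENNReal.ofReal (exp (s * ‖Y ω‖ ^ 2)) ∂μ ≤ K := by
  set n : ℝ := (Fintype.card ι : ℝ)
  have hn : 0 < n := by positivity
  have hsplit (ω : Ω) : ENNReal.ofReal (exp (s * ‖Y ω‖ ^ 2)) =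
      ∏ i, ENNReal.ofReal (exp (n * s * Y ω i ^ 2)) ^ (1 / n) := by
    rw [EuclideanSpace.real_norm_sq_eq, Finset.mul_sum, exp_sum,
      ENNReal.ofReal_prod_of_nonneg fun _ _ ↦ (exp_pos _).le]
    refine Finset.prod_congr rfl fun i _ ↦ ?_
    rw [ENNReal.ofReal_rpow_of_pos (exp_pos _), ← exp_mul]
    field_simp
  have hweights : ∑ _i : ι, 1 / n = 1 := by
    rw [Finset.sum_const, Finset.card_univ, nsmul_eq_mul, mul_one_div_cancel hn.ne']
  calc ∫⁻ ω, ENNReal.ofReal (exp (s * ‖Y ω‖ ^ 2)) ∂μ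
      = ∫⁻ ω, ∏ i, ENNReal.ofReal (exp (n * s * Y ω i ^ 2)) ^ (1 / n) ∂μ :=
        lintegral_congr hsplit
    _ ≤ ∏ i, (∫⁻ ω, ENNReal.ofReal (exp (n * s * Y ω i ^ 2)) ∂μ) ^ (1 / n) :=
        ENNReal.lintegral_prod_norm_pow_le _ (fun i _ ↦ by fun_prop) hweights
          fun _ _ ↦ by positivity
    _ ≤ ∏ _i : ι, K ^ (1 / n) := by
        gcongr with i
        exact hK i
    _ = K := by
        rw [Finset.prod_const, Finset.card_univ, ← ENNReal.rpow_natCast, ← ENNReal.rpow_mul,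
          one_div_mul_cancel hn.ne', ENNReal.rpow_one]

lemma lintegral_exp_norm_sq_le_seven [IsProbabilityMeasure μ] {d : ℕ}
    {Y : Ω → EuclideanSpace ℝ (Fin d)} {σ : ℝ} (hσ : 0 < σ)
    (hint : ∀ v, Integrable (fun ω ↦ exp ⟪v, Y ω⟫) μ)
    (hmgf : ∀ v, ∫ ω, exp ⟪v, Y ω⟫ ∂μ ≤ exp (‖v‖ ^ 2 * σ ^ 2 / (2 * d))) :
    ∫⁻ ω, ENNReal.ofReal (exp (3 / (8 * σ ^ 2) * ‖Y ω‖ ^ 2)) ∂μ ≤ 7 := by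
  rcases isEmpty_or_nonempty (Fin d) with hempty | hnonempty
  · simp [Subsingleton.elim (Y _) 0]
  have hd : (0 : ℝ) < d := by simpa using Fintype.card_pos (α := Fin d)
  set c : ℝ≥0 := ⟨σ ^ 2 / d, by positivity⟩
  have hc_coe : (c : ℝ) = σ ^ 2 / d := rfl
  have hc : 0 < c := show (0 : ℝ) < σ ^ 2 / d by positivity
  have hcoord (i : Fin d) : HasSubgaussianMGF (fun ω ↦ Y ω i) c μ := by
    have h := hasSubgaussianMGF_inner (c := c) hint
      (fun v ↦ (hmgf v).trans_eq (by rw [hc_coe]; ring_nf)) (EuclideanSpace.single i 1)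
    simpa [EuclideanSpace.inner_single_left] using h
  set b : ℝ := d * (3 / (8 * σ ^ 2))
  have hbc : 2 * b * c = 3 / 4 := by
    simp only [b, hc_coe]
    field_simp
    ring
  refine lintegral_exp_mul_norm_sq_le (fun i ↦ (hcoord i).aemeasurable) fun i ↦ ?_
  calc ∫⁻ ω, ENNReal.ofReal (exp (Fintype.card (Fin d) * (3 / (8 * σ ^ 2)) * Y ω i ^ 2)) ∂μ
      = ∫⁻ ω, ENNReal.ofReal (exp (b * Y ω i ^ 2)) ∂μ := by
        rw [Fintype.card_fin]
    _ ≤ μ univ + ENNReal.ofReal (4 * b * c / (1 - 2 * b * c)) :=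
        (hcoord i).lintegral_exp_mul_sq_le hc (by positivity) (by linarith)
    _ = 7 := by
        rw [measure_univ, show 4 * b * c = 2 * (2 * b * c) by ring, hbc]
        norm_num

lemma measure_le_norm_le_exp_mul_lintegral {E : Type*} [NormedAddCommGroup E] [MeasurableSpace E]
    [OpensMeasurableSpace E] {Y : Ω → E} (hY : AEMeasurable Y μ) {s t : ℝ} (hs : 0 ≤ s)
    (ht : 0 ≤ t) :
    μ {ω | t ≤ ‖Y ω‖} ≤
      ENNReal.ofReal (exp (-(s * t ^ 2))) * ∫⁻ ω, ENNReal.ofReal (exp (s * ‖Y ω‖ ^ 2)) ∂μ := by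
  set a := ENNReal.ofReal (exp (s * t ^ 2))
  have hsub : {ω | t ≤ ‖Y ω‖} ⊆ {ω | a ≤ ENNReal.ofReal (exp (s * ‖Y ω‖ ^ 2))} :=
    fun ω (hω : t ≤ ‖Y ω‖) ↦ by simp only [mem_ofPred_eq, a]; gcongr
  calc μ {ω | t ≤ ‖Y ω‖}
      ≤ ENNReal.ofReal (exp (-(s * t ^ 2))) *
          (a * μ {ω | a ≤ ENNReal.ofReal (exp (s * ‖Y ω‖ ^ 2))}) := by
        rw [← mul_assoc, ← ENNReal.ofReal_mul (exp_pos _).le, ← exp_add, neg_add_cancel, exp_zero,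
          ENNReal.ofReal_one, one_mul]
        exact measure_mono hsub
    _ ≤ _ := by
        gcongr
        exact mul_meas_ge_le_lintegral₀ (by fun_prop) a

lemma min_one_seven_mul_pow_six_le {y : ℝ} (hy : 0 ≤ y) : min 1 (7 * y ^ 6) ≤ 2 * y := by
  rcases le_or_gt (1 / 2) y with hy2 | hy2
  · exact (min_le_left _ _).trans (by linarith)
  · have : y ^ 5 ≤ (1 / 2) ^ 5 := by gcongr
    refine (min_le_right _ _).trans ?_
    nlinarith

end

theorem subGaussian_is_norm_subGaussian_general
    (d : ℕ) (Ω : Type) [MeasureSpace Ω] [IsProbabilityMeasure (ℙ : Measure Ω)]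
    (X : Ω → EuclideanSpace ℝ (Fin d)) (σ : ℝ) (hσ : 0 < σ)
    (hXmeas : Measurable X)
    (hmgf_int : ∀ v : EuclideanSpace ℝ (Fin d),
      Integrable (fun ω => Real.exp ⟪v, X ω - ∫ x, X x⟫))
    (hmgf : ∀ v : EuclideanSpace ℝ (Fin d),
      (∫ ω, Real.exp ⟪v, X ω - ∫ x, X x⟫) ≤ Real.exp (‖v‖ ^ 2 * σ ^ 2 / (2 * d))) :
    ∀ t : ℝ, 0 ≤ t →
      ℙ {ω | t ≤ ‖X ω - ∫ x, X x‖} ≤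
        ENNReal.ofReal (2 * Real.exp (-t ^ 2 / (16 * σ ^ 2))) := by
  intro t ht
  have hmarkov := measure_le_norm_le_exp_mul_lintegral (μ := ℙ)
    (hXmeas.sub_const (∫ x, X x)).aemeasurable (by positivity : 0 ≤ 3 / (8 * σ ^ 2)) ht
  set y := exp (-t ^ 2 / (16 * σ ^ 2))
  have hy6 : exp (-(3 / (8 * σ ^ 2) * t ^ 2)) = y ^ 6 := by
    rw [← exp_nat_mul]
    congr 1
    field_simp
    ring
  calc ℙ {ω | t ≤ ‖X ω - ∫ x, X x‖} ≤ min 1 (ENNReal.ofReal (7 * y ^ 6)) := by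
        refine le_min prob_le_one (hmarkov.trans ?_)
        rw [hy6, ENNReal.ofReal_mul (by norm_num), mul_comm, ENNReal.ofReal_ofNat]
        gcongr
        exact lintegral_exp_norm_sq_le_seven hσ hmgf_int hmgf
    _ = ENNReal.ofReal (min 1 (7 * y ^ 6)) := by rw [ENNReal.ofReal_min, ENNReal.ofReal_one]
    _ ≤ ENNReal.ofReal (2 * y) :=
        ENNReal.ofReal_le_ofReal (min_one_seven_mul_pow_six_le (exp_pos _).le)

/-- If a random vector `X` in `ℝ^d` is `(σ/√d)`-subGaussian, i.e.
`E exp(⟨v, X − E X⟩) ≤ exp(‖v‖² σ²/(2d))` for all `v ∈ ℝ^d`, then `X` is norm-subGaussian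
with parameter `2√2·σ`, i.e. `Pr(‖X − E X‖ ≥ t) ≤ 2 exp(−t²/(16σ²))` for all `t ≥ 0`. -/
theorem subGaussian_is_norm_subGaussian
    (d : ℕ) (Ω : Type) [MeasureSpace Ω] [IsProbabilityMeasure (ℙ : Measure Ω)]
    (X : Ω → EuclideanSpace ℝ (Fin d)) (σ : ℝ) (hσ : 0 < σ)
    (hXmeas : Measurable X) (hXint : Integrable X)
    (hmgf_int : ∀ v : EuclideanSpace ℝ (Fin d),
      Integrable (fun ω => Real.exp ⟪v, X ω - ∫ x, X x⟫))
    (hmgf : ∀ v : EuclideanSpace ℝ (Fin d),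
      (∫ ω, Real.exp ⟪v, X ω - ∫ x, X x⟫) ≤ Real.exp (‖v‖ ^ 2 * σ ^ 2 / (2 * d))) :
    ∀ t : ℝ, 0 ≤ t →
      ℙ {ω | t ≤ ‖X ω - ∫ x, X x‖} ≤
        ENNReal.ofReal (2 * Real.exp (-t ^ 2 / (16 * σ ^ 2))) :=
  subGaussian_is_norm_subGaussian_general d Ω X σ hσ hXmeas hmgf_int hmgf
end

section
/- For real symmetric matrices A, B, C of the same size, if A ⪯ B (i.e. B − A is positive semidefinite), then tr(exp(C + A)) ≤ tr(exp(C + B)), where exp denotes the matrix exponential and tr the trace. -/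
/-!
Adding `c • 1` to the exponent multiplies `tr (exp X)` by `Real.exp c > 0`, so we may assume
`0 ⪯ X ⪯ Y`. The exponential series is then compared term by term: along the segment
`t ↦ X + t • (Y - X)`, the derivative of `tr ((X + t • (Y - X)) ^ k)` is
`k * tr ((X + t • (Y - X)) ^ (k - 1) * (Y - X))`, the trace of a product of two positive
semidefinite matrices, hence nonnegative.
-/

open NormedSpace

namespace Matrix

variable {n : Type*} [Fintype n] [DecidableEq n]

theorem PosSemidef.trace_mul_nonneg {A B : Matrix n n ℝ} (hA : A.PosSemidef)
    (hB : B.PosSemidef) : 0 ≤ (A * B).trace := by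
  open MatrixOrder in
  obtain ⟨S, hS, -, rfl⟩ := CFC.exists_sqrt_of_isSelfAdjoint_of_quasispectrumRestricts
    hB.isHermitian (QuasispectrumRestricts.nnreal_of_nonneg hB.nonneg)
  rw [← mul_assoc, trace_mul_cycle]
  nth_rw 1 [← hS.star_eq]
  exact (hA.conjTranspose_mul_mul_same S).trace_nonneg

theorem hasDerivAt_trace_pow_add_smul (X D : Matrix n n ℝ) (k : ℕ) (t : ℝ) :
    HasDerivAt (fun s : ℝ => ((X + s • D) ^ k).trace)
      (k * ((X + t • D) ^ (k - 1) * D).trace) t := by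
  open scoped Norms.Operator in
  have hline : HasDerivAt (fun s : ℝ => X + s • D) D t :=
    ((hasDerivAt_id t).smul_const D).const_add X |>.congr_deriv (one_smul ℝ D)
  refine ((traceLinearMap n ℝ ℝ).toContinuousLinearMap.hasFDerivAt.comp_hasDerivAt t
    (hline.fun_pow' k)).congr_deriv ?_
  change trace (∑ i ∈ Finset.range k, _) = _
  rw [trace_sum, Finset.sum_congr rfl fun i hi => ?_, Finset.sum_const, Finset.card_range,
    nsmul_eq_mul]
  rw [trace_mul_cycle, ← pow_add, Nat.pred_eq_sub_one]
  congr 3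
  have := Finset.mem_range.mp hi
  omega

theorem trace_pow_le_trace_pow {X Y : Matrix n n ℝ} (hX : X.PosSemidef)
    (hXY : (Y - X).PosSemidef) (k : ℕ) : (X ^ k).trace ≤ (Y ^ k).trace := by
  have hderiv := hasDerivAt_trace_pow_add_smul X (Y - X) k
  have hmono : MonotoneOn (fun t : ℝ => ((X + t • (Y - X)) ^ k).trace) (Set.Ici 0) := by
    refine monotoneOn_of_hasDerivWithinAt_nonneg (convex_Ici 0)
      (fun t _ => (hderiv t).continuousAt.continuousWithinAt)
      (fun t _ => (hderiv t).hasDerivWithinAt) fun t ht => ?_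
    rw [interior_Ici] at ht
    have hpos : (X + t • (Y - X)).PosSemidef := hX.add (hXY.smul ht.le)
    exact mul_nonneg k.cast_nonneg ((hpos.pow _).trace_mul_nonneg hXY)
  simpa using hmono Set.self_mem_Ici (Set.mem_Ici.mpr zero_le_one) zero_le_one

theorem hasSum_trace_exp (X : Matrix n n ℝ) :
    HasSum (fun k => (k.factorial : ℝ)⁻¹ * (X ^ k).trace) (exp X).trace := by
  open scoped Norms.Operator in
  have h := (exp_series_hasSum_exp' (𝕂 := ℝ) X).mapL (traceLinearMap n ℝ ℝ).toContinuousLinearMap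
  simp only [LinearMap.coe_toContinuousLinearMap', traceLinearMap_apply, trace_smul,
    smul_eq_mul] at h
  exact h

theorem trace_exp_le_trace_exp_of_posSemidef {X Y : Matrix n n ℝ} (hX : X.PosSemidef)
    (hXY : (Y - X).PosSemidef) : (exp X).trace ≤ (exp Y).trace :=
  hasSum_le (fun k => mul_le_mul_of_nonneg_left (trace_pow_le_trace_pow hX hXY k) (by positivity))
    (hasSum_trace_exp X) (hasSum_trace_exp Y)

theorem exp_algebraMap (c : ℝ) :
    exp (algebraMap ℝ (Matrix n n ℝ) c) = algebraMap ℝ _ (Real.exp c) := by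
  open scoped Norms.Operator in
  rw [Real.exp_eq_exp_ℝ]
  exact (algebraMap_exp_comm c).symm

theorem exp_add_algebraMap (X : Matrix n n ℝ) (c : ℝ) :
    exp (X + algebraMap ℝ _ c) = Real.exp c • exp X := by
  rw [exp_add_of_commute _ _ (Algebra.commutes c X).symm, exp_algebraMap, ← Algebra.commutes,
    ← Algebra.smul_def]

theorem IsHermitian.exists_posSemidef_add_algebraMap {X : Matrix n n ℝ} (hX : X.IsHermitian) :
    ∃ c : ℝ, (X + algebraMap ℝ _ c).PosSemidef := by
  open MatrixOrder in
  obtain ⟨r, hr⟩ := X.finite_real_spectrum.bddBelow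
  have hle : algebraMap ℝ _ r ≤ X := (algebraMap_le_iff_le_spectrum hX.isSelfAdjoint).mpr hr
  exact ⟨-r, by simpa [sub_eq_add_neg] using le_iff.mp hle⟩

theorem trace_exp_le_trace_exp {X Y : Matrix n n ℝ} (hX : X.IsHermitian)
    (hXY : (Y - X).PosSemidef) : (exp X).trace ≤ (exp Y).trace := by
  obtain ⟨c, hc⟩ := hX.exists_posSemidef_add_algebraMap
  have h := trace_exp_le_trace_exp_of_posSemidef hc (Y := Y + algebraMap ℝ _ c)
    (by rwa [add_sub_add_right_eq_sub])
  rw [exp_add_algebraMap, exp_add_algebraMap, trace_smul, trace_smul, smul_eq_mul,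
    smul_eq_mul] at h
  exact le_of_mul_le_mul_left h (Real.exp_pos c)

end Matrix

theorem trace_exp_monotone_general
    (d : ℕ) (A B C : Matrix (Fin d) (Fin d) ℝ)
    (hA : A.IsHermitian) (hC : C.IsHermitian)
    (hAB : (B - A).PosSemidef) :
    (NormedSpace.exp (C + A)).trace ≤ (NormedSpace.exp (C + B)).trace :=
  Matrix.trace_exp_le_trace_exp (hC.add hA) (by rwa [add_sub_add_left_eq_sub])

/-- For real symmetric matrices `A, B, C` of the same size, if `A ⪯ B`
(i.e. `B − A` is positive semidefinite), then `tr(exp(C + A)) ≤ tr(exp(C + B))`,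
where `exp` is the matrix exponential and `tr` the trace. -/
theorem trace_exp_monotone
    (d : ℕ) (A B C : Matrix (Fin d) (Fin d) ℝ)
    (hA : A.IsHermitian) (hB : B.IsHermitian) (hC : C.IsHermitian)
    (hAB : (B - A).PosSemidef) :
    (NormedSpace.exp (C + A)).trace ≤ (NormedSpace.exp (C + B)).trace :=
  trace_exp_monotone_general d A B C hA hC hAB
end
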